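/- Let u_1,…,u_r be nonnegative integers satisfying u_i ≤ u_1 + ⋯ + û_i + ⋯ + u_r for every i (the hat denoting omission) and u_1 + ⋯ + u_r ≡ 0 (mod 2). Then there exists a special r-gon in the Bruhat–Tits tree of PGL_2 over k((t)) with side lengths u_1,…,u_r; equivalently, writing K = PGL_2(k[[t]]) and μ_i for the dominant coweight (u_i,0) of PGL_2, the identity element lies in the product of double cosets Kμ_1K · Kμ_2K ⋯ Kμ_rK in PGL_2(k((t))). -/

import Mathlib

open scoped Classical

noncomputable section

/-- The projective linear group `PGL₂` over the Laurent series field `k((t))`. -/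
abbrev PGL2 (k : Type) [Field k] : Type :=
  (Matrix (Fin 2) (Fin 2) (LaurentSeries k))ˣ ⧸
    Subgroup.center ((Matrix (Fin 2) (Fin 2) (LaurentSeries k))ˣ)

/-- The uniformizer `t ∈ k((t))`. -/
def tvar (k : Type) [Field k] : LaurentSeries k := HahnSeries.single (1 : ℤ) (1 : k)

/-- The diagonal matrix `diag(t^u, 1)`, as an element of `GL₂(k((t)))`. -/
def diagT (k : Type) [Field k] (u : ℕ) : (Matrix (Fin 2) (Fin 2) (LaurentSeries k))ˣ :=
  Matrix.nonsingInvUnit (Matrix.diagonal ![tvar k ^ u, 1]) (by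
    have h : (Matrix.diagonal ![tvar k ^ u, 1] :
        Matrix (Fin 2) (Fin 2) (LaurentSeries k)).det ≠ 0 := by
      rw [Matrix.det_diagonal, Fin.prod_univ_two]
      simp only [Matrix.cons_val_zero, Matrix.cons_val_one, Matrix.head_cons, mul_one]
      exact pow_ne_zero _ (by
        simp only [tvar]
        exact HahnSeries.single_ne_zero (one_ne_zero (α := k)))
    exact h.isUnit)

/-- The projection `GL₂(k((t))) → PGL₂(k((t)))`. -/
def toPGL2 (k : Type) [Field k] :
    (Matrix (Fin 2) (Fin 2) (LaurentSeries k))ˣ →* PGL2 k :=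
  QuotientGroup.mk' _

/-- The maximal compact subgroup `K = PGL₂(k[[t]])`, i.e. the image in `PGL₂(k((t)))` of
`GL₂(k[[t]])`. -/
def Ksub (k : Type) [Field k] : Subgroup (PGL2 k) :=
  ((toPGL2 k).comp
    (Units.map (RingHom.toMonoidHom
      ((HahnSeries.ofPowerSeries ℤ k).mapMatrix :
        Matrix (Fin 2) (Fin 2) (PowerSeries k) →+* Matrix (Fin 2) (Fin 2) (LaurentSeries k))))).range

/-! A side of length `α + β` can be split into two sides of lengths `m + α` and `m + β`:
in `GL₂(k((t)))`,
`diag(t^{m+α}, 1) · [0 1; 1 t^m] · diag(t^{m+β}, 1)`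
  `= t^m · [-1 t^α; 0 1] · diag(t^{α+β}, 1) · [1 0; t^β 1]`
with the three non-diagonal factors integral, so `Kμ_{α+β}K ⊆ Kμ_{m+α}K · Kμ_{m+β}K`.
Read backwards, the first two sides `a, b` of an admissible polygon can be merged into one side
`min (a + b) (u₃ + ⋯ + u_r)`; this keeps the polygon inequalities and the parity, so induction
on `r` reduces to a single side, which must have length `0`, and `1 ∈ K`. -/

open scoped Pointwise
open DoubleCoset

lemma exists_merge_of_polygon {a b : ℕ} {l : List ℕ}
    (hpoly : ∀ x ∈ a :: b :: l, 2 * x ≤ (a :: b :: l).sum) (heven : Even (a :: b :: l).sum) :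
    ∃ m α β, a = m + α ∧ b = m + β ∧
      (∀ x ∈ (α + β) :: l, 2 * x ≤ ((α + β) :: l).sum) ∧ Even ((α + β) :: l).sum := by
  simp only [List.sum_cons, List.mem_cons, forall_eq_or_imp, Nat.even_iff] at hpoly heven ⊢
  obtain ⟨ha, hb, hl⟩ := hpoly
  obtain ⟨m, hm⟩ : ∃ m, a + b = min (a + b) l.sum + 2 * m :=
    ⟨(a + b - min (a + b) l.sum) / 2, by omega⟩
  refine ⟨m, a - m, b - m, by omega, by omega, ⟨by omega, fun x hx => ?_⟩, by omega⟩
  have := List.le_sum_of_mem hx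
  have := hl x hx
  omega

theorem one_mem_prod_map_of_polygon {G : Type*} [Monoid G] (S : ℕ → Set G) (h0 : 1 ∈ S 0)
    (hS : ∀ m α β, S (α + β) ⊆ S (m + α) * S (m + β)) :
    ∀ l : List ℕ, (∀ x ∈ l, 2 * x ≤ l.sum) → Even l.sum → 1 ∈ (l.map S).prod
  | [], _, _ => Set.one_mem_one
  | [a], hpoly, _ => by
    obtain rfl : a = 0 := by simpa [two_mul] using hpoly a (by simp)
    simpa using h0
  | a :: b :: l, hpoly, heven => by
    obtain ⟨m, α, β, rfl, rfl, hpoly', heven'⟩ := exists_merge_of_polygon hpoly heven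
    have ih := one_mem_prod_map_of_polygon S h0 hS ((α + β) :: l) hpoly' heven'
    simp only [List.map_cons, List.prod_cons, ← mul_assoc] at ih ⊢
    exact Set.mul_subset_mul_right (hS m α β) ih
termination_by l => l.length

theorem Matrix.map_fin_two {R S : Type*} (f : R → S) (a b c d : R) :
    !![a, b; c, d].map f = !![f a, f b; f c, f d] := by
  ext i j
  fin_cases i <;> fin_cases j <;> rfl

section CartanCell

variable (k : Type) [Field k]

open Matrix PowerSeries

def cartanCell (u : ℕ) : Set (PGL2 k) :=
  doubleCoset (toPGL2 k (diagT k u)) (Ksub k) (Ksub k)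

def integralUnit (M : Matrix (Fin 2) (Fin 2) k⟦X⟧) (hM : IsUnit M.det) :
    GL (Fin 2) (LaurentSeries k) :=
  Units.map (HahnSeries.ofPowerSeries ℤ k).mapMatrix.toMonoidHom (M.nonsingInvUnit hM)

lemma toPGL2_integralUnit_mem_Ksub (M : Matrix (Fin 2) (Fin 2) k⟦X⟧) (hM : IsUnit M.det) :
    toPGL2 k (integralUnit k M hM) ∈ Ksub k :=
  ⟨M.nonsingInvUnit hM, rfl⟩

lemma integralUnit_val (M : Matrix (Fin 2) (Fin 2) k⟦X⟧) (hM : IsUnit M.det) :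
    (integralUnit k M hM : Matrix (Fin 2) (Fin 2) (LaurentSeries k)) =
      M.map (HahnSeries.ofPowerSeries ℤ k) :=
  rfl

lemma toPGL2_scalar (c : (LaurentSeries k)ˣ) :
    toPGL2 k (GeneralLinearGroup.scalar (Fin 2) c) = 1 := by
  refine (QuotientGroup.eq_one_iff _).2 ?_
  rw [GeneralLinearGroup.center_eq_range_scalar]
  exact ⟨c, rfl⟩

lemma diagT_val (u : ℕ) :
    (diagT k u : Matrix (Fin 2) (Fin 2) (LaurentSeries k)) = !![tvar k ^ u, 0; 0, 1] :=
  diagonal_vec2 _ _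

lemma diagT_zero : diagT k 0 = 1 := by
  ext : 1
  rw [diagT_val, Units.val_one, one_fin_two, pow_zero]

lemma tvar_ne_zero : tvar k ≠ 0 := HahnSeries.single_ne_zero one_ne_zero

lemma isUnit_det_zero_one_one_X_pow (m : ℕ) : IsUnit !![0, 1; 1, (X : k⟦X⟧) ^ m].det := by
  simp [det_fin_two_of]

lemma isUnit_det_neg_one_X_pow_zero_one (a : ℕ) :
    IsUnit !![-1, (X : k⟦X⟧) ^ a; 0, 1].det := by
  simp [det_fin_two_of]

lemma isUnit_det_one_zero_X_pow_one (b : ℕ) : IsUnit !![1, 0; (X : k⟦X⟧) ^ b, 1].det := by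
  simp [det_fin_two_of]

lemma ofPowerSeries_X_pow_eq_tvar_pow (n : ℕ) :
    HahnSeries.ofPowerSeries ℤ k (X ^ n) = tvar k ^ n := by
  rw [map_pow, HahnSeries.ofPowerSeries_X]
  rfl

-- both sides equal `[0 t^{m+α}; t^{m+β} t^m]`
lemma diagT_mul_integralUnit_mul_diagT (m α β : ℕ) :
    diagT k (m + α) * integralUnit k _ (isUnit_det_zero_one_one_X_pow k m) * diagT k (m + β) =
      GeneralLinearGroup.scalar (Fin 2) (Units.mk0 (tvar k) (tvar_ne_zero k) ^ m) *
        (integralUnit k _ (isUnit_det_neg_one_X_pow_zero_one k α) * diagT k (α + β) *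
          integralUnit k _ (isUnit_det_one_zero_X_pow_one k β)) := by
  refine Units.ext ?_
  simp only [Units.val_mul, GeneralLinearGroup.coe_scalar, integralUnit_val, diagT_val,
    map_fin_two, map_zero, map_one, map_neg, ofPowerSeries_X_pow_eq_tvar_pow, mul_fin_two,
    scalar_apply, diagonal_fin_two, Units.val_pow_eq_pow_val, Units.val_mk0]
  ext i j
  fin_cases i <;> fin_cases j <;> simp [pow_add, mul_comm]

lemma one_mem_cartanCell_zero : (1 : PGL2 k) ∈ cartanCell k 0 := by
  simpa [cartanCell, diagT_zero] using mem_doubleCoset_self (Ksub k) (Ksub k) 1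

lemma cartanCell_add_subset_mul (m α β : ℕ) :
    cartanCell k (α + β) ⊆ cartanCell k (m + α) * cartanCell k (m + β) := by
  have hkey := congrArg (toPGL2 k) (diagT_mul_integralUnit_mul_diagT k m α β)
  simp only [map_mul, toPGL2_scalar, one_mul] at hkey
  set x := toPGL2 k (integralUnit k _ (isUnit_det_zero_one_one_X_pow k m))
  set a := toPGL2 k (integralUnit k _ (isUnit_det_neg_one_X_pow_zero_one k α))
  set b := toPGL2 k (integralUnit k _ (isUnit_det_one_zero_X_pow_one k β))
  have hx : x ∈ Ksub k := toPGL2_integralUnit_mem_Ksub k _ _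
  have ha : a ∈ Ksub k := toPGL2_integralUnit_mem_Ksub k _ _
  have hb : b ∈ Ksub k := toPGL2_integralUnit_mem_Ksub k _ _
  have hμ : toPGL2 k (diagT k (α + β)) =
      a⁻¹ * (toPGL2 k (diagT k (m + α)) * x * toPGL2 k (diagT k (m + β))) * b⁻¹ := by
    rw [hkey]
    group
  rintro _ hgh
  obtain ⟨g, hg, h, hh, rfl⟩ := mem_doubleCoset.1 hgh
  refine Set.mem_mul.2 ⟨g * a⁻¹ * toPGL2 k (diagT k (m + α)) * x,
    mem_doubleCoset.2 ⟨g * a⁻¹, mul_mem hg (inv_mem ha), x, hx, rfl⟩,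
    toPGL2 k (diagT k (m + β)) * (b⁻¹ * h),
    mem_doubleCoset.2 ⟨1, one_mem _, b⁻¹ * h, mul_mem (inv_mem hb) hh, by group⟩, ?_⟩
  rw [hμ]
  group

end CartanCell

theorem special_r_gons_in_PGL2_tree_general
    (k : Type) [Field k]
    (r : ℕ) (u : Fin r → ℕ)
    (htri : ∀ i, u i ≤ ∑ j ∈ Finset.univ.erase i, u j)
    (heven : (∑ i, u i) % 2 = 0) :
    ∃ g : Fin r → PGL2 k,
      (∀ i, ∃ a b : PGL2 k, a ∈ Ksub k ∧ b ∈ Ksub k ∧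
        g i = a * toPGL2 k (diagT k (u i)) * b) ∧
      (List.ofFn g).prod = 1 := by
  have hpoly : ∀ x ∈ List.ofFn u, 2 * x ≤ (List.ofFn u).sum := by
    rintro _ hx
    obtain ⟨i, rfl⟩ := List.mem_ofFn.1 hx
    rw [List.sum_ofFn, ← Finset.sum_erase_add _ _ (Finset.mem_univ i)]
    linarith [htri i]
  have hone := one_mem_prod_map_of_polygon (cartanCell k) (one_mem_cartanCell_zero k)
    (cartanCell_add_subset_mul k) (List.ofFn u) hpoly
    (by rw [List.sum_ofFn, Nat.even_iff]; exact heven)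
  rw [List.map_ofFn] at hone
  obtain ⟨g, hg⟩ := Set.mem_prod_list_ofFn.1 hone
  refine ⟨fun i => g i, fun i => ?_, hg⟩
  obtain ⟨a, ha, b, hb, hab⟩ := mem_doubleCoset.1 (g i).2
  exact ⟨a, b, ha, hb, hab⟩

/-- Special `r`-gons in the Bruhat–Tits tree of `PGL₂`.
Let `u₁, …, u_r` be nonnegative integers satisfying the generalized triangle inequalities
`uᵢ ≤ Σ_{j ≠ i} uⱼ` for every `i`, with `Σ uᵢ` even.  Then there exists a special `r`-gon
in the Bruhat–Tits tree of `PGL₂` over `k((t))` with side lengths `u₁, …, u_r`;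
equivalently, the identity lies in the product of double cosets
`Kμ₁K · Kμ₂K ⋯ Kμ_rK ⊆ PGL₂(k((t)))`, where `μᵢ` is the image of `diag(t^{uᵢ}, 1)`. -/
theorem special_r_gons_in_PGL2_tree
    (k : Type) [Field k] [IsAlgClosed k]
    (r : ℕ) (hr : 0 < r) (u : Fin r → ℕ)
    (htri : ∀ i, u i ≤ ∑ j ∈ Finset.univ.erase i, u j)
    (heven : (∑ i, u i) % 2 = 0) :
    ∃ g : Fin r → PGL2 k,
      (∀ i, ∃ a b : PGL2 k, a ∈ Ksub k ∧ b ∈ Ksub k ∧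
        g i = a * toPGL2 k (diagT k (u i)) * b) ∧
      (List.ofFn g).prod = 1 :=
  special_r_gons_in_PGL2_tree_general k r u htri heven
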